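/- Let H be a free ℤ-module of rank 8 with basis a₁, a₂, a₃, a₄, b₁, b₂, b₃, b₄. In the exterior power ∧³H, the following identity holds: (a₁∧b₁)∧(−a₂) + (a₁∧b₁ + a₂∧b₂ + a₃∧b₃)∧(−a₄) + (a₁∧b₁ + a₂∧(b₂ − a₃ + b₃))∧(a₂ − a₃ + a₄) + (a₁∧b₁ + a₂∧b₂)∧a₃ + ((−a₂ + a₃)∧b₃)∧(−a₂ + a₄) = −a₂∧a₃∧a₄. -/

import Mathlib

/-!
The `a₁ ∧ b₁` terms cancel because their second factors `-a₂, -a₄, a₂ - a₃ + a₄, a₃` (the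
boundary classes) sum to zero, the `a₂ ∧ b₂` terms collapse to `a₂ ∧ b₂ ∧ a₂ = 0`, and the
`b₃` terms cancel in pairs by antisymmetry; what survives is `a₂ ∧ (-a₃) ∧ a₄`.
-/

open ExteriorAlgebra

namespace ExteriorAlgebra

variable {R M : Type*} [CommRing R] [AddCommGroup M] [Module R M]

theorem ι_mul_ι_comm (u v : M) : ι R u * ι R v = -(ι R v * ι R u) :=
  eq_neg_of_add_eq_zero_left (ι_add_mul_swap u v)

theorem ι_mul_ι_mul_ι_self (u v : M) : ι R u * ι R v * ι R u = 0 := by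
  rw [mul_assoc, ι_mul_ι_comm v u, mul_neg, ← mul_assoc, ι_sq_zero, zero_mul, neg_zero]

theorem ι_mul_ι_mul_ι_reverse (u v w : M) :
    ι R u * ι R v * ι R w = -(ι R w * ι R v * ι R u) := by
  rw [ι_mul_ι_comm u v, neg_mul, mul_assoc, ι_mul_ι_comm u w, mul_neg, ← mul_assoc,
    ι_mul_ι_comm v w, neg_mul, neg_neg]

end ExteriorAlgebra

theorem sip_wedge_identity {R M : Type*} [CommRing R] [AddCommGroup M] [Module R M]
    (a₁ a₂ a₃ a₄ b₁ b₂ b₃ : M) :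
    ι R a₁ * ι R b₁ * (-ι R a₂)
      + (ι R a₁ * ι R b₁ + ι R a₂ * ι R b₂ + ι R a₃ * ι R b₃) * (-ι R a₄)
      + (ι R a₁ * ι R b₁ + ι R a₂ * (ι R b₂ - ι R a₃ + ι R b₃)) * (ι R a₂ - ι R a₃ + ι R a₄)
      + (ι R a₁ * ι R b₁ + ι R a₂ * ι R b₂) * ι R a₃
      + (-ι R a₂ + ι R a₃) * ι R b₃ * (-ι R a₂ + ι R a₄)
      = -(ι R a₂ * ι R a₃ * ι R a₄) := by
  set p := ι R a₁ * ι R b₁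
  set x₂ := ι R a₂
  set x₃ := ι R a₃
  set x₄ := ι R a₄
  set y₂ := ι R b₂
  set y₃ := ι R b₃
  have regroup :
      p * (-x₂) + (p + x₂ * y₂ + x₃ * y₃) * (-x₄) + (p + x₂ * (y₂ - x₃ + y₃)) * (x₂ - x₃ + x₄)
        + (p + x₂ * y₂) * x₃ + (-x₂ + x₃) * y₃ * (-x₂ + x₄)
      = (p + x₂ * y₂) * (-x₂ - x₄ + (x₂ - x₃ + x₄) + x₃) + x₂ * y₂ * x₂
        - x₂ * x₃ * (x₂ - x₃ + x₄)
        + (x₂ * y₃ * (x₂ - x₃ + x₄) - x₃ * y₃ * x₄ + (-x₂ + x₃) * y₃ * (-x₂ + x₄)) := by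
    noncomm_ring
  have boundary_sum : -x₂ - x₄ + (x₂ - x₃ + x₄) + x₃ = 0 := by abel
  have hy₂ : x₂ * y₂ * x₂ = 0 := ι_mul_ι_mul_ι_self a₂ b₂
  have hx : x₂ * x₃ * (x₂ - x₃ + x₄) = x₂ * x₃ * x₄ := by
    rw [mul_add, mul_sub, ι_mul_ι_mul_ι_self, mul_assoc x₂, ι_sq_zero, mul_zero, sub_zero,
      zero_add]
  have hy₃ : x₂ * y₃ * (x₂ - x₃ + x₄) - x₃ * y₃ * x₄ + (-x₂ + x₃) * y₃ * (-x₂ + x₄) = 0 := by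
    have h₁ : x₂ * y₃ * x₂ = 0 := ι_mul_ι_mul_ι_self a₂ b₃
    have h₂ : x₃ * y₃ * x₂ = -(x₂ * y₃ * x₃) := ι_mul_ι_mul_ι_reverse a₃ b₃ a₂
    simp only [mul_add, mul_sub, add_mul, neg_mul, mul_neg, h₁, h₂]
    abel
  rw [regroup, boundary_sum, hy₂, hx, hy₃, mul_zero]
  abel

/-- The exterior-algebra computation of the image of an SIP-map under the
Johnson homomorphism: in the exterior algebra of a free ℤ-module of rank 8
with basis `a₁,a₂,a₃,a₄,b₁,b₂,b₃,b₄`, the sum of the images of the five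
bounding-pair maps equals `-a₂∧a₃∧a₄`. -/
theorem johnson_image_of_sip (H : Type*) [AddCommGroup H] [Module ℤ H]
    (B : Module.Basis (Fin 8) ℤ H) :
    letI ι : H →ₗ[ℤ] ExteriorAlgebra ℤ H := ExteriorAlgebra.ι ℤ
    letI a₁ := ι (B 0); letI a₂ := ι (B 1); letI a₃ := ι (B 2); letI a₄ := ι (B 3)
    letI b₁ := ι (B 4); letI b₂ := ι (B 5); letI b₃ := ι (B 6); letI b₄ := ι (B 7)
    (a₁ * b₁) * (-a₂)
      + (a₁ * b₁ + a₂ * b₂ + a₃ * b₃) * (-a₄)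
      + (a₁ * b₁ + a₂ * (b₂ - a₃ + b₃)) * (a₂ - a₃ + a₄)
      + (a₁ * b₁ + a₂ * b₂) * a₃
      + ((-a₂ + a₃) * b₃) * (-a₂ + a₄)
      = -(a₂ * a₃ * a₄) :=
  sip_wedge_identity (B 0) (B 1) (B 2) (B 3) (B 4) (B 5) (B 6)
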